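/- Let A < B be symmetric n×n matrices, U = B − A. For (h, k) ∈ ℝⁿ × ℝⁿ, the inequality ‖k − ½(A+B)h‖_{U⁻¹} ≤ ½‖h‖_U holds if and only if Sg_{𝒮_A, 𝒮_B}((h,k)) ≥ 0, where Sg is computed via the decomposition (h,k) = v₁ + v₂ with v₁ in the graph Lagrangian of A and v₂ in the graph Lagrangian of B. Equivalently, the set {(h,k) : ‖k − ½(A+B)h‖_{U⁻¹} ≤ ½‖h‖_U} equals the cone C(𝒮_A, 𝒮_B) = {(h, Sh) : A ≤ S ≤ B}. -/

import Mathlib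

open Matrix

/-- The standard symplectic form on ℝ²ⁿ = ℝⁿ × ℝⁿ. -/
def omegaForm {n : ℕ} (u v : (Fin n → ℝ) × (Fin n → ℝ)) : ℝ :=
  v.2 ⬝ᵥ u.1 - u.2 ⬝ᵥ v.1

/-- The cone C(𝒮_A, 𝒮_B) between the graph Lagrangians of A ≤ B. -/
def coneBetween {n : ℕ} (S₁ S₂ : Matrix (Fin n) (Fin n) ℝ) :
    Set ((Fin n → ℝ) × (Fin n → ℝ)) :=
  {v | ∃ S : Matrix (Fin n) (Fin n) ℝ, S.IsSymm ∧ (S - S₁).PosSemidef ∧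
    (S₂ - S).PosSemidef ∧ v.2 = S *ᵥ v.1}

/-!
Since `U = B - A` is invertible, every `(h, k)` splits as `(x₁, A x₁) + (x₂, B x₂)`. Then
`k - ½(A + B)h = ½U(x₂ - x₁)`, so the squared inequality reads
`(x₂ - x₁)·U(x₂ - x₁) ≤ (x₁ + x₂)·U(x₁ + x₂)`, i.e. `0 ≤ x₁·Ux₂`, and this is `Sg`.
If `k = Sh` with `A ≤ S ≤ B`, then `(S - A)x₁ = (B - S)x₂` and
`x₁·Ux₂ = x₁·(S - A)x₁ + x₂·(B - S)x₂ ≥ 0`. Conversely, if `x₁·Ux₂ ≥ 0`, the rank-one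
perturbation `S = A + (x₂·Uh)⁻¹ (Ux₂)(Ux₂)ᵀ` maps `h` to `k`, and `S ≤ B` is the
Cauchy–Schwarz inequality for the form of `U`.
-/

namespace Matrix

variable {ι : Type*}

lemma PosSemidef.isSymm {M : Matrix ι ι ℝ} (hM : M.PosSemidef) : M.IsSymm :=
  (conjTranspose_eq_transpose_of_trivial M).symm.trans hM.isHermitian

variable [Fintype ι]

lemma IsSymm.dotProduct_mulVec_comm {M : Matrix ι ι ℝ} (hM : M.IsSymm) (x y : ι → ℝ) :
    x ⬝ᵥ (M *ᵥ y) = y ⬝ᵥ (M *ᵥ x) := by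
  rw [← dotProduct_transpose_mulVec, hM.eq]

lemma PosSemidef.dotProduct_mulVec_self_nonneg {M : Matrix ι ι ℝ} (hM : M.PosSemidef)
    (x : ι → ℝ) : 0 ≤ x ⬝ᵥ (M *ᵥ x) := by
  simpa using hM.dotProduct_mulVec_nonneg x

lemma PosSemidef.dotProduct_mulVec_sq_le {M : Matrix ι ι ℝ} (hM : M.PosSemidef)
    (x y : ι → ℝ) :
    (x ⬝ᵥ (M *ᵥ y)) ^ 2 ≤ (x ⬝ᵥ (M *ᵥ x)) * (y ⬝ᵥ (M *ᵥ y)) := by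
  have hdisc := discrim_le_zero (a := y ⬝ᵥ (M *ᵥ y)) (b := 2 * (x ⬝ᵥ (M *ᵥ y)))
      (c := x ⬝ᵥ (M *ᵥ x)) fun t ↦ by
    have := hM.dotProduct_mulVec_self_nonneg (x + t • y)
    simp only [mulVec_add, mulVec_smul, dotProduct_add, add_dotProduct, dotProduct_smul,
      smul_dotProduct, smul_eq_mul, hM.isSymm.dotProduct_mulVec_comm y x] at this
    linear_combination this
  rw [discrim] at hdisc
  linarith

lemma PosSemidef.exists_posSemidef_sub_mulVec_add_eq {U : Matrix ι ι ℝ} (hU : U.PosSemidef)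
    {x y : ι → ℝ} (hxy : 0 ≤ x ⬝ᵥ (U *ᵥ y)) :
    ∃ P : Matrix ι ι ℝ, P.PosSemidef ∧ (U - P).PosSemidef ∧
      P *ᵥ (x + y) = U *ᵥ y := by
  have hyy := hU.dotProduct_mulVec_self_nonneg y
  have hσ : y ⬝ᵥ (U *ᵥ y) ≤ y ⬝ᵥ (U *ᵥ (x + y)) := by
    rw [mulVec_add, dotProduct_add, hU.isSymm.dotProduct_mulVec_comm y x]
    linarith
  set σ := y ⬝ᵥ (U *ᵥ (x + y))
  have hσ0 : 0 ≤ σ := hyy.trans hσ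
  have hP : (σ⁻¹ • vecMulVec (U *ᵥ y) (U *ᵥ y)).PosSemidef := by
    simpa using (posSemidef_vecMulVec_self_star (U *ᵥ y)).smul (inv_nonneg.2 hσ0)
  refine ⟨_, hP, ?_, ?_⟩
  · refine .of_dotProduct_mulVec_nonneg (hU.isHermitian.sub hP.isHermitian) fun z ↦ ?_
    have hCS := hU.dotProduct_mulVec_sq_le y z
    have hzz := hU.dotProduct_mulVec_self_nonneg z
    have hquad : star z ⬝ᵥ ((U - σ⁻¹ • vecMulVec (U *ᵥ y) (U *ᵥ y)) *ᵥ z)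
        = z ⬝ᵥ (U *ᵥ z) - σ⁻¹ * (y ⬝ᵥ (U *ᵥ z)) ^ 2 := by
      simp only [star_trivial, sub_mulVec, smul_mulVec, vecMulVec_mulVec, dotProduct_sub,
        dotProduct_smul, op_smul_eq_smul, smul_eq_mul, dotProduct_comm _ z,
        hU.isSymm.dotProduct_mulVec_comm z y]
      ring
    rw [hquad, sub_nonneg]
    calc σ⁻¹ * (y ⬝ᵥ (U *ᵥ z)) ^ 2 ≤ σ⁻¹ * (σ * z ⬝ᵥ (U *ᵥ z)) := by
          gcongr; nlinarith
      _ ≤ z ⬝ᵥ (U *ᵥ z) := by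
        rw [← mul_assoc]
        exact mul_le_of_le_one_left hzz (inv_mul_le_one_of_le₀ le_rfl hσ0)
  · have hUy : (U *ᵥ y) ⬝ᵥ (x + y) = σ := by
      rw [dotProduct_comm, hU.isSymm.dotProduct_mulVec_comm]
    rcases hσ0.eq_or_lt with h0 | h0
    · have : U *ᵥ y = 0 := by
        rw [← hU.dotProduct_mulVec_zero_iff, star_trivial]
        exact le_antisymm (h0 ▸ hσ) hyy
      simp [this]
    · simp [smul_mulVec, vecMulVec_mulVec, hUy, smul_smul, h0.ne']

variable {A B S : Matrix ι ι ℝ} {x₁ x₂ : ι → ℝ}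

lemma dotProduct_sub_mulVec_nonneg_of_between (hSA : (S - A).PosSemidef)
    (hBS : (B - S).PosSemidef) (hS : A *ᵥ x₁ + B *ᵥ x₂ = S *ᵥ (x₁ + x₂)) :
    0 ≤ x₁ ⬝ᵥ ((B - A) *ᵥ x₂) := by
  have h : (B - S) *ᵥ x₂ = (S - A) *ᵥ x₁ := by
    rw [mulVec_add] at hS
    rw [sub_mulVec, sub_mulVec]
    linear_combination (norm := module) hS
  calc 0 ≤ x₁ ⬝ᵥ ((S - A) *ᵥ x₁) + x₂ ⬝ᵥ ((B - S) *ᵥ x₂) :=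
        add_nonneg (hSA.dotProduct_mulVec_self_nonneg x₁) (hBS.dotProduct_mulVec_self_nonneg x₂)
    _ = x₁ ⬝ᵥ ((B - S) *ᵥ x₂) + x₁ ⬝ᵥ ((S - A) *ᵥ x₂) := by
        rw [h, hSA.isSymm.dotProduct_mulVec_comm x₁ x₂, ← h]
    _ = x₁ ⬝ᵥ ((B - A) *ᵥ x₂) := by
        rw [← dotProduct_add, ← add_mulVec, sub_add_sub_cancel]

lemma exists_between_of_dotProduct_sub_mulVec_nonneg (hA : A.IsSymm)
    (hU : (B - A).PosSemidef) (h : 0 ≤ x₁ ⬝ᵥ ((B - A) *ᵥ x₂)) :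
    ∃ S : Matrix ι ι ℝ, S.IsSymm ∧ (S - A).PosSemidef ∧ (B - S).PosSemidef ∧
      A *ᵥ x₁ + B *ᵥ x₂ = S *ᵥ (x₁ + x₂) := by
  obtain ⟨P, hP, hUP, hPx⟩ := hU.exists_posSemidef_sub_mulVec_add_eq h
  refine ⟨A + P, ?_, by rwa [add_sub_cancel_left], by rwa [sub_add_eq_sub_sub], ?_⟩
  · exact hA.add hP.isSymm
  · rw [add_mulVec, hPx, sub_mulVec, mulVec_add]
    abel

lemma mulVec_add_mulVec_sub_half_smul_mulVec_add :
    A *ᵥ x₁ + B *ᵥ x₂ - (1/2 : ℝ) • ((A + B) *ᵥ (x₁ + x₂)) =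
      (1/2 : ℝ) • ((B - A) *ᵥ (x₂ - x₁)) := by
  simp only [add_mulVec, sub_mulVec, mulVec_add, mulVec_sub]
  module

lemma sqrt_le_half_sqrt_iff_dotProduct_sub_mulVec_nonneg [DecidableEq ι]
    (hU : (B - A).PosDef) (x₁ x₂ : ι → ℝ) :
    √(((B - A)⁻¹ *ᵥ
          (A *ᵥ x₁ + B *ᵥ x₂ - (1/2 : ℝ) • ((A + B) *ᵥ (x₁ + x₂)))) ⬝ᵥ
        (A *ᵥ x₁ + B *ᵥ x₂ - (1/2 : ℝ) • ((A + B) *ᵥ (x₁ + x₂))))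
      ≤ 1/2 * √(((B - A) *ᵥ (x₁ + x₂)) ⬝ᵥ (x₁ + x₂)) ↔
      0 ≤ x₁ ⬝ᵥ ((B - A) *ᵥ x₂) := by
  have hUsymm : (B - A).IsSymm := hU.posSemidef.isSymm
  have hpolar : ((B - A) *ᵥ (x₁ + x₂)) ⬝ᵥ (x₁ + x₂) -
      (x₂ - x₁) ⬝ᵥ ((B - A) *ᵥ (x₂ - x₁)) = 4 * (x₁ ⬝ᵥ ((B - A) *ᵥ x₂)) := by
    simp only [mulVec_add, mulVec_sub, add_dotProduct, sub_dotProduct, dotProduct_add,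
      dotProduct_sub, dotProduct_comm ((B - A) *ᵥ _), hUsymm.dotProduct_mulVec_comm x₂ x₁]
    ring
  have hinv :
      (B - A)⁻¹ *ᵥ ((1/2 : ℝ) • ((B - A) *ᵥ (x₂ - x₁))) = (1/2 : ℝ) • (x₂ - x₁) := by
    rw [mulVec_smul, mulVec_mulVec,
      nonsing_inv_mul _ ((isUnit_iff_isUnit_det _).1 hU.isUnit), one_mulVec]
  have hsum : 0 ≤ ((B - A) *ᵥ (x₁ + x₂)) ⬝ᵥ (x₁ + x₂) := by
    rw [dotProduct_comm]; exact hU.posSemidef.dotProduct_mulVec_self_nonneg _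
  rw [mulVec_add_mulVec_sub_half_smul_mulVec_add, hinv, smul_dotProduct, dotProduct_smul,
    smul_eq_mul, smul_eq_mul, ← mul_assoc, Real.sqrt_mul (by norm_num),
    Real.sqrt_mul_self (by norm_num), mul_le_mul_iff_right₀ (by norm_num),
    Real.sqrt_le_sqrt_iff hsum]
  constructor <;> intro h <;> linarith

lemma exists_graph_decomposition [DecidableEq ι] (hU : IsUnit (B - A)) (h k : ι → ℝ) :
    ∃ x₁ x₂ : ι → ℝ, (h, k) = (x₁, A *ᵥ x₁) + (x₂, B *ᵥ x₂) := by
  set x := (B - A)⁻¹ *ᵥ (k - A *ᵥ h)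
  have hx : B *ᵥ x - A *ᵥ x = k - A *ᵥ h := by
    rw [← sub_mulVec, mulVec_mulVec, mul_nonsing_inv _ ((isUnit_iff_isUnit_det _).1 hU),
      one_mulVec]
  refine ⟨h - x, x, Prod.ext (sub_add_cancel h x).symm ?_⟩
  change k = A *ᵥ (h - x) + B *ᵥ x
  rw [mulVec_sub]
  linear_combination (norm := module) -hx

end Matrix

lemma omegaForm_graph {n : ℕ} {A : Matrix (Fin n) (Fin n) ℝ} (hA : A.IsSymm)
    (B : Matrix (Fin n) (Fin n) ℝ) (x₁ x₂ : Fin n → ℝ) :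
    omegaForm (x₁, A *ᵥ x₁) (x₂, B *ᵥ x₂) = x₁ ⬝ᵥ ((B - A) *ᵥ x₂) := by
  rw [omegaForm, sub_mulVec, dotProduct_sub, dotProduct_comm, hA.dotProduct_mulVec_comm x₁ x₂,
    dotProduct_comm x₂]

theorem stmt18_general (n : ℕ) (A B : Matrix (Fin n) (Fin n) ℝ)
    (hA : A.IsSymm) (hU : (B - A).PosDef) :
    (∀ h k x₁ x₂ : Fin n → ℝ,
      ((h, k) : (Fin n → ℝ) × (Fin n → ℝ)) = (x₁, A *ᵥ x₁) + (x₂, B *ᵥ x₂) →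
      (Real.sqrt (((B - A)⁻¹ *ᵥ (k - (1/2 : ℝ) • ((A + B) *ᵥ h))) ⬝ᵥ
            (k - (1/2 : ℝ) • ((A + B) *ᵥ h)))
          ≤ (1/2) * Real.sqrt (((B - A) *ᵥ h) ⬝ᵥ h) ↔
        0 ≤ omegaForm (x₁, A *ᵥ x₁) (x₂, B *ᵥ x₂))) ∧
    {p : (Fin n → ℝ) × (Fin n → ℝ) |
        Real.sqrt (((B - A)⁻¹ *ᵥ (p.2 - (1/2 : ℝ) • ((A + B) *ᵥ p.1))) ⬝ᵥ
            (p.2 - (1/2 : ℝ) • ((A + B) *ᵥ p.1)))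
          ≤ (1/2) * Real.sqrt (((B - A) *ᵥ p.1) ⬝ᵥ p.1)}
      = coneBetween A B := by
  refine ⟨fun h k x₁ x₂ hhk ↦ ?_, ?_⟩
  · simp only [Prod.mk_add_mk, Prod.mk.injEq] at hhk
    obtain ⟨rfl, rfl⟩ := hhk
    rw [omegaForm_graph hA]
    exact sqrt_le_half_sqrt_iff_dotProduct_sub_mulVec_nonneg hU x₁ x₂
  · ext ⟨h, k⟩
    obtain ⟨x₁, x₂, hhk⟩ := exists_graph_decomposition hU.isUnit h k
    simp only [Prod.mk_add_mk, Prod.mk.injEq] at hhk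
    obtain ⟨rfl, rfl⟩ := hhk
    rw [Set.mem_ofPred_eq, sqrt_le_half_sqrt_iff_dotProduct_sub_mulVec_nonneg hU x₁ x₂]
    exact ⟨exists_between_of_dotProduct_sub_mulVec_nonneg hA hU.posSemidef,
      fun ⟨_, _, hSA, hBS, hS⟩ ↦ dotProduct_sub_mulVec_nonneg_of_between hSA hBS hS⟩

theorem stmt18 (n : ℕ) (A B : Matrix (Fin n) (Fin n) ℝ)
    (hA : A.IsSymm) (hB : B.IsSymm) (hU : (B - A).PosDef) :
    (∀ h k x₁ x₂ : Fin n → ℝ,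
      ((h, k) : (Fin n → ℝ) × (Fin n → ℝ)) = (x₁, A *ᵥ x₁) + (x₂, B *ᵥ x₂) →
      (Real.sqrt (((B - A)⁻¹ *ᵥ (k - (1/2 : ℝ) • ((A + B) *ᵥ h))) ⬝ᵥ
            (k - (1/2 : ℝ) • ((A + B) *ᵥ h)))
          ≤ (1/2) * Real.sqrt (((B - A) *ᵥ h) ⬝ᵥ h) ↔
        0 ≤ omegaForm (x₁, A *ᵥ x₁) (x₂, B *ᵥ x₂))) ∧
    {p : (Fin n → ℝ) × (Fin n → ℝ) |
        Real.sqrt (((B - A)⁻¹ *ᵥ (p.2 - (1/2 : ℝ) • ((A + B) *ᵥ p.1))) ⬝ᵥ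
            (p.2 - (1/2 : ℝ) • ((A + B) *ᵥ p.1)))
          ≤ (1/2) * Real.sqrt (((B - A) *ᵥ p.1) ⬝ᵥ p.1)}
      = coneBetween A B :=
  stmt18_general n A B hA hU
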